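/- Let (U,V) be a pair of random variables on a probability space (Ω, 𝓕, P), each uniformly distributed on [0,1] (representing a copula C). Then P(U ≤ V) is the least element (i.e., the attained infimum) of the set { P(G1⁻¹(U) ≤ G2⁻¹(V)) : G1, G2 ∈ 𝒢, G1 ⪯st G2 }; in particular the infimum is a minimum and is attained when G1 = G2. -/

import Mathlib

open MeasureTheory Set
open scoped ENNReal

noncomputable section

/-- A cumulative distribution function on ℝ. -/
def IsCDF (G : ℝ → ℝ) : Prop :=
  Monotone G ∧ (∀ x, ContinuousWithinAt G (Ici x) x) ∧
    Filter.Tendsto G Filter.atBot (nhds 0) ∧ Filter.Tendsto G Filter.atTop (nhds 1)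

/-- The class 𝒢: CDFs that are continuous and strictly increasing where 0 < G < 1. -/
def MemG (G : ℝ → ℝ) : Prop :=
  IsCDF G ∧ Continuous G ∧ StrictMonoOn G {x | 0 < G x ∧ G x < 1}

/-- Generalized inverse (quantile function). -/
def Ginv (G : ℝ → ℝ) (u : ℝ) : ℝ := sInf {x | u ≤ G x}

/-- Usual stochastic ordering between CDFs: G1 ⪯st G2 iff G2 ≤ G1 pointwise. -/
def StOrd (G1 G2 : ℝ → ℝ) : Prop := ∀ t, G2 t ≤ G1 t

/-- A random variable uniformly distributed on [0,1]. -/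
def IsUniform01 {Ω : Type*} [MeasurableSpace Ω] (P : Measure Ω) (U : Ω → ℝ) : Prop :=
  Measurable U ∧ Measure.map U P = volume.restrict (Icc 0 1)

/-! For `G₁ ⪯st G₂` and `u ≤ v`, every `x` with `v ≤ G₂ x` also has `u ≤ G₁ x`, so
`G₁⁻¹ u ≤ G₂⁻¹ v`; both infima are genuine (bounded below, nonempty) once `0 < u` and `v < 1`,
which holds almost surely for `U` and `V`. Hence `{U ≤ V}` is a.s. contained in every event of
the set. The bound is attained by `G₁ = G₂ =` the uniform CDF on `[0,1]`, whose quantile function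
is the identity on `(0,1]`. -/

open Filter Topology

def uniformCDF (x : ℝ) : ℝ := min 1 (max 0 x)

lemma uniformCDF_eq_self {x : ℝ} (hx : x ∈ Icc 0 1) : uniformCDF x = x := by
  simp [uniformCDF, hx.1, hx.2]

lemma continuous_uniformCDF : Continuous uniformCDF :=
  continuous_const.min (continuous_const.max continuous_id)

lemma uniformCDF_mem_Ioo {x : ℝ} (hx : 0 < uniformCDF x ∧ uniformCDF x < 1) : x ∈ Ioo 0 1 := by
  by_contra hx'
  rcases (not_and_or.mp hx').imp not_lt.mp not_lt.mp with h | h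
  · simp [uniformCDF, h] at hx
  · simp [uniformCDF, h, zero_le_one.trans h] at hx

lemma memG_uniformCDF : MemG uniformCDF := by
  have hbot : Tendsto uniformCDF atBot (𝓝 0) :=
    tendsto_const_nhds.congr' <| (eventually_le_atBot 0).mono fun x hx => by
      simp [uniformCDF, hx]
  have htop : Tendsto uniformCDF atTop (𝓝 1) :=
    tendsto_const_nhds.congr' <| (eventually_ge_atTop 1).mono fun x hx => by
      simp [uniformCDF, hx, zero_le_one.trans hx]
  refine ⟨⟨fun a b hab => min_le_min le_rfl (max_le_max le_rfl hab),
    fun x => continuous_uniformCDF.continuousWithinAt, hbot, htop⟩, continuous_uniformCDF, ?_⟩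
  intro a ha b hb hab
  rwa [uniformCDF_eq_self (Ioo_subset_Icc_self (uniformCDF_mem_Ioo ha)),
    uniformCDF_eq_self (Ioo_subset_Icc_self (uniformCDF_mem_Ioo hb))]

lemma ginv_uniformCDF {u : ℝ} (hu : u ∈ Ioc 0 1) : Ginv uniformCDF u = u := by
  have hset : {x | u ≤ uniformCDF x} = Ici u := by
    ext x
    simp only [uniformCDF, mem_ofPred_eq, mem_Ici, le_min_iff, le_max_iff, hu.2, true_and]
    exact ⟨fun h => h.resolve_left (not_le.mpr hu.1), Or.inr⟩
  rw [Ginv, hset, csInf_Ici]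

lemma bddBelow_setOf_le {G : ℝ → ℝ} (hG : Tendsto G atBot (𝓝 0)) {u : ℝ} (hu : 0 < u) :
    BddBelow {x | u ≤ G x} := by
  obtain ⟨x₀, hx₀⟩ := eventually_atBot.mp (hG.eventually_lt_const hu)
  exact ⟨x₀, fun y hy => le_of_not_ge fun hyx => (hx₀ y hyx).not_ge hy⟩

lemma nonempty_setOf_le {G : ℝ → ℝ} (hG : Tendsto G atTop (𝓝 1)) {v : ℝ} (hv : v < 1) :
    {x | v ≤ G x}.Nonempty :=
  ((hG.eventually_const_lt hv).exists).imp fun _ hx => hx.le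

lemma ginv_le_ginv_of_stOrd {G₁ G₂ : ℝ → ℝ} (h₁ : Tendsto G₁ atBot (𝓝 0))
    (h₂ : Tendsto G₂ atTop (𝓝 1)) (hst : StOrd G₁ G₂) {u v : ℝ} (hu : 0 < u) (hv : v < 1)
    (huv : u ≤ v) : Ginv G₁ u ≤ Ginv G₂ v :=
  csInf_le_csInf (bddBelow_setOf_le h₁ hu) (nonempty_setOf_le h₂ hv)
    fun _ hx => huv.trans (hx.trans (hst _))

lemma IsUniform01.ae_mem_Ioo {Ω : Type*} [MeasurableSpace Ω] {P : Measure Ω} {U : Ω → ℝ}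
    (hU : IsUniform01 P U) : ∀ᵐ ω ∂P, U ω ∈ Ioo 0 1 := by
  refine ae_of_ae_map hU.1.aemeasurable ?_
  rw [hU.2]
  filter_upwards [ae_restrict_mem measurableSet_Icc, ae_restrict_of_ae Ioo_ae_eq_Icc]
    with x hx hIoo
  exact hIoo.mpr hx

theorem stmt5_general {Ω : Type*} [MeasurableSpace Ω] (P : Measure Ω)
    (U V : Ω → ℝ) (hU : IsUniform01 P U) (hV : IsUniform01 P V) :
    IsLeast {p : ℝ≥0∞ | ∃ G1 G2 : ℝ → ℝ, MemG G1 ∧ MemG G2 ∧ StOrd G1 G2 ∧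
        p = P {ω | Ginv G1 (U ω) ≤ Ginv G2 (V ω)}}
      (P {ω | U ω ≤ V ω}) := by
  refine ⟨⟨uniformCDF, uniformCDF, memG_uniformCDF, memG_uniformCDF, fun _ => le_rfl, ?_⟩, ?_⟩
  · refine measure_congr ?_
    filter_upwards [hU.ae_mem_Ioo, hV.ae_mem_Ioo] with ω hu hv
    change (U ω ≤ V ω) = (Ginv uniformCDF (U ω) ≤ Ginv uniformCDF (V ω))
    rw [ginv_uniformCDF (Ioo_subset_Ioc_self hu), ginv_uniformCDF (Ioo_subset_Ioc_self hv)]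
  · rintro p ⟨G₁, G₂, hG₁, hG₂, hst, rfl⟩
    refine measure_mono_ae ?_
    filter_upwards [hU.ae_mem_Ioo, hV.ae_mem_Ioo] with ω hu hv huv
    exact ginv_le_ginv_of_stOrd hG₁.1.2.2.1 hG₂.1.2.2.2 hst hu.1 hv.2 huv

/-- P(U ≤ V) is the least element of
{ P(G1⁻¹(U) ≤ G2⁻¹(V)) : G1, G2 ∈ 𝒢, G1 ⪯st G2 }; the infimum is a minimum. -/
theorem stmt5 {Ω : Type*} [MeasurableSpace Ω] (P : Measure Ω) [IsProbabilityMeasure P]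
    (U V : Ω → ℝ) (hU : IsUniform01 P U) (hV : IsUniform01 P V) :
    IsLeast {p : ℝ≥0∞ | ∃ G1 G2 : ℝ → ℝ, MemG G1 ∧ MemG G2 ∧ StOrd G1 G2 ∧
        p = P {ω | Ginv G1 (U ω) ≤ Ginv G2 (V ω)}}
      (P {ω | U ω ≤ V ω}) :=
  stmt5_general P U V hU hV
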